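/- Let D₊, D₋, β₊, β₋ > 0 be positive reals, Δ ∈ ℝ, and m a nonzero integer. Let A⁺ : [0,1] → ℝ and A⁻ : [-1,0] → ℝ solve (A⁺)'' - D₊²·m²·A⁺ = 0 on (0,1), (A⁻)'' - D₋²·m²·A⁻ = 0 on (-1,0), with A⁺(1) = 0, A⁻(-1) = 0, transmission conditions A⁺(0) - A⁻(0) = -Δ and β₊·(A⁺)'(0) = β₋·(A⁻)'(0). Then such a solution pair exists, is unique, and satisfies β₋·(A⁻)'(0) = Δ·( tanh(D₊·m)/(β₊·D₊·m) + tanh(D₋·m)/(β₋·D₋·m) )⁻¹. -/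

import Mathlib

/-!
Solutions of `u'' = k² u` vanishing at an endpoint `p` are multiples of `sinh (k (y - p))`, so on
each phase the value at the interface is a fixed multiple of the derivative there:
`A⁺(0) = -(tanh k₊ / k₊) (A⁺)'(0)` and `A⁻(0) = (tanh k₋ / k₋) (A⁻)'(0)`, with `k± = D± m`.
Writing `q` for the common flux `β₊ (A⁺)'(0) = β₋ (A⁻)'(0)`, the jump condition becomes
`Δ = q (tanh k₊ / (β₊ k₊) + tanh k₋ / (β₋ k₋))`, and the bracket is positive because `tanh x / x > 0`.
This determines `q`, hence the Cauchy data of both phases at `0` and so the solution; conversely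
the two multiples of `sinh` with this flux form a solution.
-/

open Set Real

def IsTransSol (Dp Dn βp βn Δ : ℝ) (m : ℤ) (Ap An : ℝ → ℝ) : Prop :=
  ContDiff ℝ 2 Ap ∧ ContDiff ℝ 2 An ∧
  (∀ y ∈ Set.Ioo (0:ℝ) 1,
    deriv (deriv Ap) y - Dp ^ 2 * (m : ℝ) ^ 2 * Ap y = 0) ∧
  (∀ y ∈ Set.Ioo (-1:ℝ) 0,
    deriv (deriv An) y - Dn ^ 2 * (m : ℝ) ^ 2 * An y = 0) ∧
  Ap 1 = 0 ∧ An (-1) = 0 ∧ Ap 0 - An 0 = -Δ ∧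
  βp * deriv Ap 0 = βn * deriv An 0

lemma eq_of_hasDerivAt_of_eq_zero_on_Ioo {f f' : ℝ → ℝ} {a b : ℝ}
    (hf : ∀ x, HasDerivAt f (f' x) x) (h : ∀ x ∈ Ioo a b, f' x = 0) {x y : ℝ}
    (hx : x ∈ Icc a b) (hy : y ∈ Icc a b) : f x = f y := by
  wlog hxy : x < y generalizing x y
  · rcases (not_lt.mp hxy).lt_or_eq with hyx | rfl
    · exact (this hy hx hyx).symm
    · rfl
  obtain ⟨c, hc, hslope⟩ := exists_hasDerivAt_eq_slope f f' hxy
    (fun z _ => (hf z).continuousAt.continuousWithinAt) (fun z _ => hf z)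
  have hc' : c ∈ Ioo a b := ⟨hx.1.trans_lt hc.1, hc.2.trans_le hy.2⟩
  rw [h c hc', eq_comm, div_eq_zero_iff, sub_eq_zero] at hslope
  exact (hslope.resolve_right (sub_ne_zero.mpr hxy.ne')).symm

lemma hasDerivAt_sinh_mul_sub (k p y : ℝ) :
    HasDerivAt (fun x => sinh (k * (x - p))) (k * cosh (k * (y - p))) y := by
  simpa [mul_comm] using (((hasDerivAt_id y).sub_const p).const_mul k).sinh

lemma hasDerivAt_cosh_mul_sub (k p y : ℝ) :
    HasDerivAt (fun x => cosh (k * (x - p))) (k * sinh (k * (y - p))) y := by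
  simpa [mul_comm] using (((hasDerivAt_id y).sub_const p).const_mul k).cosh

section HyperbolicODE

variable {u : ℝ → ℝ} {k a b p : ℝ}

/-- Both identities come from the first integrals `u' sinh - k u cosh` and `u' cosh - k u sinh`
of `u'' = k² u`, evaluated at `p`, combined with `cosh² - sinh² = 1`. -/
theorem hyperbolic_ode_eq (hu : ContDiff ℝ 2 u)
    (hode : ∀ y ∈ Ioo a b, deriv (deriv u) y = k ^ 2 * u y) (hp : p ∈ Icc a b)
    {y : ℝ} (hy : y ∈ Icc a b) :
    k * u y = k * u p * cosh (k * (y - p)) + deriv u p * sinh (k * (y - p)) ∧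
      deriv u y = deriv u p * cosh (k * (y - p)) + k * u p * sinh (k * (y - p)) := by
  have hu₁ := hu.differentiable two_ne_zero
  have hu₂ := hu.differentiable_deriv_two
  have hW₁ : ∀ x, HasDerivAt
      (fun x => deriv u x * sinh (k * (x - p)) - k * (u x * cosh (k * (x - p))))
      ((deriv (deriv u) x - k ^ 2 * u x) * sinh (k * (x - p))) x := fun x =>
    (((hu₂ x).hasDerivAt.mul (hasDerivAt_sinh_mul_sub k p x)).sub
        (((hu₁ x).hasDerivAt.mul (hasDerivAt_cosh_mul_sub k p x)).const_mul k)).congr_deriv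
        (by ring)
  have hW₂ : ∀ x, HasDerivAt
      (fun x => deriv u x * cosh (k * (x - p)) - k * (u x * sinh (k * (x - p))))
      ((deriv (deriv u) x - k ^ 2 * u x) * cosh (k * (x - p))) x := fun x =>
    (((hu₂ x).hasDerivAt.mul (hasDerivAt_cosh_mul_sub k p x)).sub
        (((hu₁ x).hasDerivAt.mul (hasDerivAt_sinh_mul_sub k p x)).const_mul k)).congr_deriv
        (by ring)
  have e₁ := eq_of_hasDerivAt_of_eq_zero_on_Ioo hW₁
    (fun x hx => by rw [hode x hx, sub_self, zero_mul]) hy hp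
  have e₂ := eq_of_hasDerivAt_of_eq_zero_on_Ioo hW₂
    (fun x hx => by rw [hode x hx, sub_self, zero_mul]) hy hp
  simp only [sub_self, mul_zero, sinh_zero, cosh_zero, mul_one, zero_sub, sub_zero] at e₁ e₂
  have hcs := cosh_sq_sub_sinh_sq (k * (y - p))
  constructor
  · linear_combination sinh (k * (y - p)) * e₂ - cosh (k * (y - p)) * e₁ - k * u y * hcs
  · linear_combination cosh (k * (y - p)) * e₂ - sinh (k * (y - p)) * e₁ - deriv u y * hcs

theorem hyperbolic_ode_eq_tanh_div_mul_deriv (hk : k ≠ 0) (hu : ContDiff ℝ 2 u)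
    (hode : ∀ y ∈ Ioo a b, deriv (deriv u) y = k ^ 2 * u y)
    (hp : p ∈ Icc a b) (hup : u p = 0) {y : ℝ} (hy : y ∈ Icc a b) :
    u y = tanh (k * (y - p)) / k * deriv u y := by
  obtain ⟨hval, hder⟩ := hyperbolic_ode_eq hu hode hp hy
  rw [hup, mul_zero, zero_mul, zero_add] at hval
  rw [hup, mul_zero, zero_mul, add_zero] at hder
  have hcosh := (cosh_pos (k * (y - p))).ne'
  rw [tanh_eq_sinh_div_cosh, hder]
  field_simp
  linear_combination hval

theorem hyperbolic_ode_eq_of_eq_of_deriv_eq {v : ℝ → ℝ} (hk : k ≠ 0)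
    (hu : ContDiff ℝ 2 u) (hv : ContDiff ℝ 2 v)
    (hodeu : ∀ y ∈ Ioo a b, deriv (deriv u) y = k ^ 2 * u y)
    (hodev : ∀ y ∈ Ioo a b, deriv (deriv v) y = k ^ 2 * v y) (hp : p ∈ Icc a b)
    (h₀ : u p = v p) (h₁ : deriv u p = deriv v p) {y : ℝ} (hy : y ∈ Icc a b) : u y = v y := by
  have hu_eq := (hyperbolic_ode_eq hu hodeu hp hy).1
  have hv_eq := (hyperbolic_ode_eq hv hodev hp hy).1
  rw [h₀, h₁, ← hv_eq] at hu_eq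
  exact mul_left_cancel₀ hk hu_eq

end HyperbolicODE

lemma hasDerivAt_const_mul_sinh_mul_sub (c k p y : ℝ) :
    HasDerivAt (fun x => c * sinh (k * (x - p))) (c * k * cosh (k * (y - p))) y := by
  simpa [mul_assoc] using (hasDerivAt_sinh_mul_sub k p y).const_mul c

lemma deriv_const_mul_sinh_mul_sub (c k p : ℝ) :
    deriv (fun x => c * sinh (k * (x - p))) = fun y => c * k * cosh (k * (y - p)) :=
  funext fun y => (hasDerivAt_const_mul_sinh_mul_sub c k p y).deriv

lemma deriv_deriv_const_mul_sinh_mul_sub (c k p y : ℝ) :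
    deriv (deriv fun x => c * sinh (k * (x - p))) y = k ^ 2 * (c * sinh (k * (y - p))) := by
  rw [deriv_const_mul_sinh_mul_sub, ((hasDerivAt_cosh_mul_sub k p y).const_mul (c * k)).deriv]
  ring

lemma contDiff_const_mul_sinh_mul_sub (c k p : ℝ) {n : WithTop ℕ∞} :
    ContDiff ℝ n fun x => c * sinh (k * (x - p)) := by
  fun_prop

lemma tanh_div_self_pos {x : ℝ} (hx : x ≠ 0) : 0 < tanh x / x := by
  rw [tanh_eq_sinh_div_cosh, div_div]
  rcases hx.lt_or_gt with hneg | hpos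
  · exact div_pos_of_neg_of_neg (sinh_neg_iff.mpr hneg) (mul_neg_of_pos_of_neg (cosh_pos x) hneg)
  · exact div_pos (sinh_pos_iff.mpr hpos) (mul_pos (cosh_pos x) hpos)

noncomputable def transDenom (Dp Dn βp βn : ℝ) (m : ℤ) : ℝ :=
  tanh (Dp * m) / (βp * (Dp * m)) + tanh (Dn * m) / (βn * (Dn * m))

lemma transDenom_pos {Dp Dn βp βn : ℝ} {m : ℤ} (hkp : Dp * m ≠ 0) (hkn : Dn * m ≠ 0)
    (hβp : 0 < βp) (hβn : 0 < βn) : 0 < transDenom Dp Dn βp βn m := by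
  rw [transDenom, div_mul_eq_div_div_swap _ βp, div_mul_eq_div_div_swap _ βn]
  exact add_pos (div_pos (tanh_div_self_pos hkp) hβp) (div_pos (tanh_div_self_pos hkn) hβn)

lemma exists_isTransSol {Dp Dn βp βn : ℝ} (Δ : ℝ) {m : ℤ} (hkp : Dp * m ≠ 0) (hkn : Dn * m ≠ 0)
    (hβp : βp ≠ 0) (hβn : βn ≠ 0) (hS : transDenom Dp Dn βp βn m ≠ 0) :
    ∃ Ap An : ℝ → ℝ, IsTransSol Dp Dn βp βn Δ m Ap An := by
  obtain ⟨q, hq⟩ : ∃ q, q * transDenom Dp Dn βp βn m = Δ := ⟨Δ / _, div_mul_cancel₀ Δ hS⟩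
  -- amplitudes chosen so that both fluxes `β± (A±)'(0)` equal `q`
  refine ⟨fun y => q / (βp * (Dp * m) * cosh (Dp * m)) * sinh (Dp * m * (y - 1)),
    fun y => q / (βn * (Dn * m) * cosh (Dn * m)) * sinh (Dn * m * (y - -1)),
    contDiff_const_mul_sinh_mul_sub _ _ _, contDiff_const_mul_sinh_mul_sub _ _ _,
    fun y _ => by rw [deriv_deriv_const_mul_sinh_mul_sub]; ring,
    fun y _ => by rw [deriv_deriv_const_mul_sinh_mul_sub]; ring,
    by simp, by simp, ?_, ?_⟩
  all_goals
    simp only [deriv_const_mul_sinh_mul_sub, ← hq, transDenom, tanh_eq_sinh_div_cosh]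
    generalize Dp * (m : ℝ) = kp at *
    generalize Dn * (m : ℝ) = kn at *
    have hcp := (cosh_pos kp).ne'
    have hcn := (cosh_pos kn).ne'
    simp only [zero_sub, sub_neg_eq_add, zero_add, mul_neg, mul_one, sinh_neg, cosh_neg]
    field_simp
  ring

namespace IsTransSol

variable {Dp Dn βp βn Δ : ℝ} {m : ℤ} {Ap An : ℝ → ℝ}

lemma ode_pos (h : IsTransSol Dp Dn βp βn Δ m Ap An) :
    ∀ y ∈ Ioo (0 : ℝ) 1, deriv (deriv Ap) y = (Dp * m) ^ 2 * Ap y :=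
  fun y hy => by linear_combination h.2.2.1 y hy

lemma ode_neg (h : IsTransSol Dp Dn βp βn Δ m Ap An) :
    ∀ y ∈ Ioo (-1 : ℝ) 0, deriv (deriv An) y = (Dn * m) ^ 2 * An y :=
  fun y hy => by linear_combination h.2.2.2.1 y hy

lemma pos_zero_eq (h : IsTransSol Dp Dn βp βn Δ m Ap An) (hk : Dp * m ≠ 0) :
    Ap 0 = -(tanh (Dp * m) / (Dp * m)) * deriv Ap 0 := by
  rw [hyperbolic_ode_eq_tanh_div_mul_deriv hk h.1 h.ode_pos (by norm_num) h.2.2.2.2.1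
    (by norm_num),
    zero_sub, mul_neg_one, tanh_neg, neg_div]

lemma neg_zero_eq (h : IsTransSol Dp Dn βp βn Δ m Ap An) (hk : Dn * m ≠ 0) :
    An 0 = tanh (Dn * m) / (Dn * m) * deriv An 0 := by
  rw [hyperbolic_ode_eq_tanh_div_mul_deriv hk h.2.1 h.ode_neg (by norm_num) h.2.2.2.2.2.1
    (by norm_num),
    zero_sub, neg_neg, mul_one]

lemma flux_mul_transDenom (h : IsTransSol Dp Dn βp βn Δ m Ap An) (hkp : Dp * m ≠ 0)
    (hkn : Dn * m ≠ 0) (hβp : βp ≠ 0) (hβn : βn ≠ 0) :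
    βn * deriv An 0 * transDenom Dp Dn βp βn m = Δ := by
  have hAp := h.pos_zero_eq hkp
  have hAn := h.neg_zero_eq hkn
  obtain ⟨-, -, -, -, -, -, hjump, hflux⟩ := h
  rw [transDenom]
  generalize Dp * (m : ℝ) = kp at *
  generalize Dn * (m : ℝ) = kn at *
  calc βn * deriv An 0 * (tanh kp / (βp * kp) + tanh kn / (βn * kn))
      = βp * deriv Ap 0 * (tanh kp / (βp * kp)) + βn * deriv An 0 * (tanh kn / (βn * kn)) := by
        rw [mul_add, hflux]
    _ = tanh kp / kp * deriv Ap 0 + tanh kn / kn * deriv An 0 := by field_simp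
    _ = Δ := by linear_combination hAp - hAn - hjump

lemma eqOn {Ap' An' : ℝ → ℝ} (h : IsTransSol Dp Dn βp βn Δ m Ap An)
    (h' : IsTransSol Dp Dn βp βn Δ m Ap' An') (hkp : Dp * m ≠ 0) (hkn : Dn * m ≠ 0)
    (hβp : βp ≠ 0) (hβn : βn ≠ 0) (hS : transDenom Dp Dn βp βn m ≠ 0) :
    EqOn Ap Ap' (Icc 0 1) ∧ EqOn An An' (Icc (-1) 0) := by
  have hq : βn * deriv An 0 = βn * deriv An' 0 := mul_right_cancel₀ hS <|
    (h.flux_mul_transDenom hkp hkn hβp hβn).trans (h'.flux_mul_transDenom hkp hkn hβp hβn).symm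
  have hAn : deriv An 0 = deriv An' 0 := mul_left_cancel₀ hβn hq
  have hAp : deriv Ap 0 = deriv Ap' 0 :=
    mul_left_cancel₀ hβp (by rw [h.2.2.2.2.2.2.2, h'.2.2.2.2.2.2.2, hq])
  exact ⟨fun y hy => hyperbolic_ode_eq_of_eq_of_deriv_eq hkp h.1 h'.1 h.ode_pos h'.ode_pos
      (by norm_num) (by rw [h.pos_zero_eq hkp, h'.pos_zero_eq hkp, hAp]) hAp hy,
    fun y hy => hyperbolic_ode_eq_of_eq_of_deriv_eq hkn h.2.1 h'.2.1 h.ode_neg h'.ode_neg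
      (by norm_num) (by rw [h.neg_zero_eq hkn, h'.neg_zero_eq hkn, hAn]) hAn hy⟩

end IsTransSol

theorem stmt_4 (Dp Dn βp βn : ℝ) (hDp : 0 < Dp) (hDn : 0 < Dn)
    (hβp : 0 < βp) (hβn : 0 < βn) (Δ : ℝ) (m : ℤ) (hm : m ≠ 0) :
    (∃ Ap An : ℝ → ℝ, IsTransSol Dp Dn βp βn Δ m Ap An) ∧
    (∀ Ap An Ap' An' : ℝ → ℝ, IsTransSol Dp Dn βp βn Δ m Ap An →
      IsTransSol Dp Dn βp βn Δ m Ap' An' →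
      (∀ y ∈ Set.Icc (0:ℝ) 1, Ap y = Ap' y) ∧
      (∀ y ∈ Set.Icc (-1:ℝ) 0, An y = An' y)) ∧
    (∀ Ap An : ℝ → ℝ, IsTransSol Dp Dn βp βn Δ m Ap An →
      βn * deriv An 0 = Δ *
        (Real.tanh (Dp * (m : ℝ)) / (βp * (Dp * (m : ℝ)))
          + Real.tanh (Dn * (m : ℝ)) / (βn * (Dn * (m : ℝ))))⁻¹) := by
  have hm' : (m : ℝ) ≠ 0 := Int.cast_ne_zero.mpr hm
  have hkp : Dp * m ≠ 0 := mul_ne_zero hDp.ne' hm'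
  have hkn : Dn * m ≠ 0 := mul_ne_zero hDn.ne' hm'
  have hS := (transDenom_pos hkp hkn hβp hβn).ne'
  refine ⟨exists_isTransSol Δ hkp hkn hβp.ne' hβn.ne' hS,
    fun Ap An Ap' An' h h' => h.eqOn h' hkp hkn hβp.ne' hβn.ne' hS,
    fun Ap An h => ?_⟩
  rw [← h.flux_mul_transDenom hkp hkn hβp.ne' hβn.ne']
  exact (mul_inv_cancel_right₀ hS _).symm
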